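/- arXiv:0803.0705 — 3 statements merged into one kernel-verified Lean document; each statement's English description precedes it below -/
import Mathlib

section
/- Let k ≥ 1 be an integer, a_1 < … < a_k distinct real numbers, and ε_1, …, ε_k positive reals with ε_1 + … + ε_k = 1. Let P : ℂ → ℂ be a polynomial of degree at most k−1 and set E(x,y) := (x − y)·∏_{j=1}^k (y − a_j) + P(y). Suppose there exist R > 0 and functions y_1, …, y_k : {x ∈ ℂ : |x| > R} → ℂ such that for each i = 1, …, k and all |x| > R one has E(x, y_i(x)) = 0 and y_i(x) = a_i + ε_i/x + O(1/x²) as |x| → ∞. Then P is uniquely determined: P(y) = −∑_{j=1}^k ε_j ∏_{i≠j} (y − a_i) for all y ∈ ℂ, and consequently E(x,y) = ∏_{j=1}^k (y − a_j) · ( x − y − ∑_{j=1}^k ε_j/(y − a_j) ) for all y ∈ ℂ \ {a_1, …, a_k}. -/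
/-!
Along the branch `y_i` the curve equation reads
`(x - y_i) (y_i - a_i) ∏_{j ≠ i} (y_i - a_j) = -P(y_i)`. Since `y_i → a_i` and
`x (y_i - a_i) → ε_i` as `x → ∞`, this forces `P(a_i) = -ε_i ∏_{j ≠ i} (a_i - a_j)`.
A polynomial of degree `< k` is determined by its values at the `k` distinct points `a_i`,
and `-∑_j ε_j ∏_{i ≠ j} (y - a_i)` takes exactly these values.
-/

open Filter Asymptotics

open Topology Bornology Polynomial Finset

theorem tendsto_mul_sub_of_isBigO_inv_sq {𝕜 : Type*} [NormedField 𝕜] {f : 𝕜 → 𝕜} {c e : 𝕜}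
    (h : (fun x => f x - c - e / x) =O[cobounded 𝕜] fun x => 1 / x ^ 2) :
    Tendsto (fun x => x * (f x - c)) (cobounded 𝕜) (𝓝 e) := by
  have hsmall : (fun x => x * (f x - c - e / x)) =O[cobounded 𝕜] fun x => x * (1 / x ^ 2) :=
    (isBigO_refl _ _).mul h
  have hinv : (fun x : 𝕜 => x * (1 / x ^ 2)) = fun x => x⁻¹ := by
    ext x; rcases eq_or_ne x 0 with rfl | hx
    · simp
    · field_simp
  rw [hinv] at hsmall
  have := (hsmall.trans_tendsto tendsto_inv₀_cobounded).add_const e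
  rw [zero_add] at this
  refine this.congr' ?_
  filter_upwards [eventually_ne_cobounded 0] with x hx
  field_simp
  ring

theorem tendsto_of_isBigO_inv_sq {𝕜 : Type*} [NormedField 𝕜] {f : 𝕜 → 𝕜} {c e : 𝕜}
    (h : (fun x => f x - c - e / x) =O[cobounded 𝕜] fun x => 1 / x ^ 2) :
    Tendsto f (cobounded 𝕜) (𝓝 c) := by
  have := ((tendsto_mul_sub_of_isBigO_inv_sq h).mul tendsto_inv₀_cobounded).add_const c
  rw [mul_zero, zero_add] at this
  refine this.congr' ?_
  filter_upwards [eventually_ne_cobounded 0] with x hx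
  field_simp
  ring

theorem eq_neg_mul_of_tendsto_branch {𝕜 : Type*} [NormedField 𝕜] {l : Filter 𝕜} [l.NeBot]
    {Y g p : 𝕜 → 𝕜} {a e : 𝕜} (hY : Tendsto Y l (𝓝 a))
    (hxY : Tendsto (fun x => x * (Y x - a)) l (𝓝 e))
    (hg : ContinuousAt g a) (hp : ContinuousAt p a)
    (hroot : ∀ᶠ x in l, (x - Y x) * (Y x - a) * g (Y x) + p (Y x) = 0) :
    p a = -(e * g a) := by
  have hYY : Tendsto (fun x => Y x * (Y x - a)) l (𝓝 0) := by
    simpa using hY.mul (hY.sub_const a)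
  have hlhs : Tendsto (fun x => (x - Y x) * (Y x - a) * g (Y x)) l (𝓝 (e * g a)) := by
    simpa [sub_mul] using (hxY.sub hYY).mul (hg.tendsto.comp hY)
  have hrhs : Tendsto (fun x => (x - Y x) * (Y x - a) * g (Y x)) l (𝓝 (-p a)) :=
    (hp.tendsto.comp hY).neg.congr' <| hroot.mono fun x hx => (eq_neg_of_add_eq_zero_left hx).symm
  rw [← tendsto_nhds_unique hrhs hlhs, neg_neg]

theorem Polynomial.eval_eq_sum_mul_prod_erase_of_eval_nodes {ι F : Type*} [Fintype ι]
    [DecidableEq ι] [Field F] {v : ι → F} (hv : Function.Injective v) (w : ι → F) {P : F[X]}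
    (hP : P.degree < Fintype.card ι)
    (hPv : ∀ i, P.eval (v i) = w i * ∏ j ∈ univ.erase i, (v i - v j)) (y : F) :
    P.eval y = ∑ j, w j * ∏ i ∈ univ.erase j, (y - v i) := by
  set Q := ∑ j, w j • Lagrange.nodal (univ.erase j) v
  have hQ : Q.degree < Fintype.card ι := by
    rw [← mem_degreeLT]
    refine Submodule.sum_mem _ fun j _ => Submodule.smul_mem _ _ ?_
    rw [mem_degreeLT, Lagrange.degree_nodal, card_erase_of_mem (mem_univ j), card_univ]
    exact_mod_cast Nat.sub_lt (Fintype.card_pos_iff.2 ⟨j⟩) one_pos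
  have hQeval (x : F) : Q.eval x = ∑ j, w j * ∏ i ∈ univ.erase j, (x - v i) := by
    simp [Q, eval_finsetSum, Lagrange.eval_nodal]
  have hPQ : P = Q := by
    refine eq_of_degrees_lt_of_eval_index_eq univ hv.injOn hP hQ fun i _ => ?_
    rw [hPv, hQeval, sum_eq_single_of_mem i (mem_univ i)]
    intro j _ hji
    rw [prod_eq_zero (mem_erase.2 ⟨hji.symm, mem_univ i⟩) (sub_self _), mul_zero]
  rw [hPQ, hQeval]

theorem Finset.prod_mul_sum_div_sub {ι F : Type*} [Fintype ι] [DecidableEq ι] [Field F]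
    (v w : ι → F) {y : F} (hy : ∀ j, y ≠ v j) :
    (∏ i, (y - v i)) * ∑ j, w j / (y - v j) = ∑ j, w j * ∏ i ∈ univ.erase j, (y - v i) := by
  rw [mul_sum]
  refine sum_congr rfl fun j _ => ?_
  rw [← mul_prod_erase _ _ (mem_univ j)]
  field_simp [sub_ne_zero.2 (hy j)]

theorem stmt_0_general (k : ℕ) (hk : 1 ≤ k) (a ε : Fin k → ℝ)
    (ha : StrictMono a)
    (P : Polynomial ℂ) (hP : P.degree ≤ (k - 1 : ℕ))
    (E : ℂ → ℂ → ℂ)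
    (hE : ∀ x y : ℂ, E x y = (x - y) * ∏ j, (y - (a j : ℂ)) + P.eval y)
    (R : ℝ) (Y : Fin k → ℂ → ℂ)
    (hroot : ∀ i, ∀ x : ℂ, R < ‖x‖ → E x (Y i x) = 0)
    (hasymp : ∀ i, (fun x : ℂ => Y i x - (a i : ℂ) - (ε i : ℂ) / x)
      =O[Bornology.cobounded ℂ] fun x : ℂ => 1 / x ^ 2) :
    (∀ y : ℂ, P.eval y = -∑ j, (ε j : ℂ) * ∏ i ∈ Finset.univ.erase j, (y - (a i : ℂ))) ∧
    (∀ x y : ℂ, (∀ j, y ≠ (a j : ℂ)) →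
      E x y = (∏ j, (y - (a j : ℂ))) *
        (x - y - ∑ j, (ε j : ℂ) / (y - (a j : ℂ)))) := by
  have hPa (i : Fin k) : P.eval (a i : ℂ) = -(ε i : ℂ) * ∏ j ∈ univ.erase i, ((a i : ℂ) - a j) := by
    rw [neg_mul]
    refine eq_neg_mul_of_tendsto_branch (g := fun y => ∏ j ∈ univ.erase i, (y - (a j : ℂ)))
      (tendsto_of_isBigO_inv_sq (hasymp i)) (tendsto_mul_sub_of_isBigO_inv_sq (hasymp i))
      (by fun_prop) P.continuousAt ?_
    filter_upwards [tendsto_norm_cobounded_atTop.eventually_gt_atTop R] with x hx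
    rw [mul_assoc, mul_prod_erase _ (fun j => Y i x - (a j : ℂ)) (mem_univ i), ← hE]
    exact hroot i x hx
  have hPdeg : P.degree < Fintype.card (Fin k) := by
    rw [Fintype.card_fin]
    exact hP.trans_lt (by exact_mod_cast Nat.sub_lt hk one_pos)
  have hinj : Function.Injective fun i => (a i : ℂ) := Complex.ofReal_injective.comp ha.injective
  have hPy := P.eval_eq_sum_mul_prod_erase_of_eval_nodes hinj _ hPdeg hPa
  refine ⟨fun y => by simp [hPy], fun x y hy => ?_⟩
  rw [hE, hPy, mul_sub, prod_mul_sum_div_sub _ _ hy]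
  simp only [neg_mul, sum_neg_distrib]
  ring

/-- determination of the polynomial `P` in the spectral curve
`E(x,y) = (x-y)·∏_j (y-a_j) + P(y)` of the Gaussian matrix model with external source,
from the existence of branches `y_i(x) = a_i + ε_i/x + O(1/x²)`. -/
theorem stmt_0 (k : ℕ) (hk : 1 ≤ k) (a ε : Fin k → ℝ)
    (ha : StrictMono a) (hε : ∀ i, 0 < ε i) (hsum : ∑ i, ε i = 1)
    (P : Polynomial ℂ) (hP : P.degree ≤ (k - 1 : ℕ))
    (E : ℂ → ℂ → ℂ)
    (hE : ∀ x y : ℂ, E x y = (x - y) * ∏ j, (y - (a j : ℂ)) + P.eval y)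
    (R : ℝ) (hR : 0 < R) (Y : Fin k → ℂ → ℂ)
    (hroot : ∀ i, ∀ x : ℂ, R < ‖x‖ → E x (Y i x) = 0)
    (hasymp : ∀ i, (fun x : ℂ => Y i x - (a i : ℂ) - (ε i : ℂ) / x)
      =O[Bornology.cobounded ℂ] fun x : ℂ => 1 / x ^ 2) :
    (∀ y : ℂ, P.eval y = -∑ j, (ε j : ℂ) * ∏ i ∈ Finset.univ.erase j, (y - (a i : ℂ))) ∧
    (∀ x y : ℂ, (∀ j, y ≠ (a j : ℂ)) →
      E x y = (∏ j, (y - (a j : ℂ))) *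
        (x - y - ∑ j, (ε j : ℂ) / (y - (a j : ℂ)))) :=
  stmt_0_general k hk a ε ha P hP E hE R Y hroot hasymp
end

section
/- Let k ≥ 1 be an integer, a_1 < … < a_k distinct real numbers, and ε_1, …, ε_k positive reals with ε_1 + … + ε_k = 1. Define F(z) := z + ∑_{j=1}^k ε_j/(z − a_j) on ℂ \ {a_1, …, a_k}. Then there exist R > 0 and δ > 0, with the discs D(a_1, δ), …, D(a_k, δ) pairwise disjoint, such that for every x ∈ ℂ with |x| > R the equation F(z) = x has exactly k+1 solutions in ℂ \ {a_1, …, a_k}, namely: exactly one solution in each disc D(a_i, δ) (i = 1, …, k), exactly one solution in the disc D(x, 1), and no other solutions. -/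
open Filter Function Metric Finset Polynomial Bornology Topology

/-!
For large `|x|`, the equation `F z = x` is a small perturbation of `z = x` near `x` and of
`(z - a i) (x - z) = ε i` near each pole, so Banach's fixed point theorem yields a solution in each
of `k + 1` pairwise disjoint discs. Clearing denominators turns `F z = x` into a monic polynomial
equation of degree `k + 1`, so there are no other solutions and each disc contains exactly one.
-/

section Estimates

variable {ι 𝕜 : Type*} [NormedField 𝕜]

theorem norm_div_sub_div_le {e p q : 𝕜} {c : ℝ} (hc : 0 < c) (hp : c ≤ ‖p‖) (hq : c ≤ ‖q‖) :
    ‖e / p - e / q‖ ≤ ‖e‖ / c ^ 2 * ‖p - q‖ := by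
  have hp0 : p ≠ 0 := norm_pos_iff.1 (hc.trans_le hp)
  have hq0 : q ≠ 0 := norm_pos_iff.1 (hc.trans_le hq)
  have hdiff : e / p - e / q = e * (q - p) / (p * q) := by field_simp
  calc ‖e / p - e / q‖ = ‖e‖ * ‖p - q‖ / (‖p‖ * ‖q‖) := by
        rw [hdiff, norm_div, norm_mul, norm_mul, norm_sub_rev]
    _ ≤ ‖e‖ * ‖p - q‖ / (c * c) := by gcongr
    _ = ‖e‖ / c ^ 2 * ‖p - q‖ := by ring

variable {s : Finset ι} {e a : ι → 𝕜} {z w : 𝕜} {c : ℝ}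

theorem norm_sum_div_sub_le (hc : 0 < c) (hz : ∀ j ∈ s, c ≤ ‖z - a j‖) :
    ‖∑ j ∈ s, e j / (z - a j)‖ ≤ (∑ j ∈ s, ‖e j‖) / c := by
  rw [Finset.sum_div]
  refine (norm_sum_le _ _).trans (Finset.sum_le_sum fun j hj => ?_)
  rw [norm_div]
  exact div_le_div_of_nonneg_left (norm_nonneg _) hc (hz j hj)

theorem norm_sum_div_sub_sub_sum_div_sub_le (hc : 0 < c) (hz : ∀ j ∈ s, c ≤ ‖z - a j‖)
    (hw : ∀ j ∈ s, c ≤ ‖w - a j‖) :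
    ‖∑ j ∈ s, e j / (z - a j) - ∑ j ∈ s, e j / (w - a j)‖ ≤
      (∑ j ∈ s, ‖e j‖) / c ^ 2 * ‖z - w‖ := by
  rw [← Finset.sum_sub_distrib, Finset.sum_div, Finset.sum_mul]
  refine (norm_sum_le _ _).trans (Finset.sum_le_sum fun j hj => ?_)
  simpa using norm_div_sub_div_le hc (hz j hj) (hw j hj)

end Estimates

theorem exists_fixedPoint_of_dist_le {α : Type*} [MetricSpace α] {f : α → α} {s : Set α}
    {K : ℝ} (hs : IsComplete s) (hne : s.Nonempty) (hmaps : Set.MapsTo f s s) (hK : K < 1)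
    (hf : ∀ x ∈ s, ∀ y ∈ s, dist (f x) (f y) ≤ K * dist x y) : ∃ z ∈ s, f z = z := by
  have hlip : LipschitzOnWith K.toNNReal f s := LipschitzOnWith.of_dist_le_mul fun x hx y hy =>
    (hf x hx y hy).trans (by gcongr; exact Real.le_coe_toNNReal K)
  obtain ⟨x, hx⟩ := hne
  obtain ⟨z, hz, hfz, -⟩ := ContractingWith.exists_fixedPoint' hs hmaps
    ⟨Real.toNNReal_lt_one.2 hK, hlip.mapsToRestrict hmaps⟩ hx (edist_ne_top _ _)
  exact ⟨z, hz, hfz⟩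

theorem exists_pos_forall_le_dist {α ι : Type*} [MetricSpace α] [Finite ι] {a : ι → α}
    (ha : Injective a) : ∃ δ > 0, ∀ i j, i ≠ j → δ ≤ dist (a i) (a j) := by
  have h : ∀ p : ι × ι, ∀ᶠ δ in 𝓝[>] (0 : ℝ), p.1 ≠ p.2 → δ ≤ dist (a p.1) (a p.2) := by
    intro p
    by_cases hp : p.1 = p.2
    · exact Eventually.of_forall fun _ h => absurd hp h
    · filter_upwards [nhdsWithin_le_nhds (Iic_mem_nhds (dist_pos.2 (ha.ne hp)))] with δ hδ _
        using hδ
  obtain ⟨δ, hδ, hδ0⟩ := ((eventually_all.2 h).and self_mem_nhdsWithin).exists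
  exact ⟨δ, hδ0, fun i j hij => hδ (i, j) hij⟩

theorem exists_unique_mem_of_ncard_le {α κ : Type*} [Finite κ] {S : Set α} {U : κ → Set α}
    (hS : S.Finite) (hcard : S.ncard ≤ Nat.card κ) (hU : Pairwise (Disjoint on U))
    (hmeet : ∀ o, (S ∩ U o).Nonempty) :
    (∀ o, ∃! z, z ∈ U o ∧ z ∈ S) ∧ S ⊆ ⋃ o, U o ∧ S.ncard = Nat.card κ := by
  choose g hg using hmeet
  have hinj : Injective g := fun o o' h => by
    by_contra hne
    exact (hU hne).ne_of_mem (hg o).2 (hg o').2 h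
  have hrange : Set.range g = S := Set.eq_of_subset_of_ncard_le
    (Set.range_subset_iff.2 fun o => (hg o).1) (by rwa [Set.ncard_range_of_injective hinj]) hS
  have hmem : ∀ z ∈ S, ∀ o, z ∈ U o → z = g o := by
    intro z hz o hzo
    obtain ⟨o', rfl⟩ := hrange ▸ hz
    by_contra hne
    exact (hU fun h => hne (congrArg g h)).ne_of_mem (hg o').2 hzo rfl
  refine ⟨fun o => ⟨g o, ⟨(hg o).2, (hg o).1⟩, fun z hz => hmem z hz.2 o hz.1⟩, ?_, ?_⟩
  · rw [← hrange]
    rintro _ ⟨o, rfl⟩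
    exact Set.mem_iUnion.2 ⟨o, (hg o).2⟩
  · rw [← hrange, Set.ncard_range_of_injective hinj]

section Algebra

variable {ι 𝕜 : Type*} [Fintype ι] [Field 𝕜]

def spectralMap (a ε : ι → 𝕜) (z : 𝕜) : 𝕜 := z + ∑ j, ε j / (z - a j)

def spectralFiber (a ε : ι → 𝕜) (x : 𝕜) : Set 𝕜 := {z | (∀ j, z ≠ a j) ∧ spectralMap a ε z = x}

noncomputable def spectralPolynomial [DecidableEq ι] (a ε : ι → 𝕜) (x : 𝕜) : 𝕜[X] :=
  (X - C x) * Lagrange.nodal univ a + ∑ j, C (ε j) * Lagrange.nodal (univ.erase j) a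

variable (a ε : ι → 𝕜) (x : 𝕜)

theorem degree_sum_C_mul_nodal_erase_lt [DecidableEq ι] :
    (∑ j, C (ε j) * Lagrange.nodal (univ.erase j) a).degree <
      ((X - C x) * Lagrange.nodal univ a).degree := by
  have hle : (∑ j, C (ε j) * Lagrange.nodal (univ.erase j) a).natDegree ≤ Fintype.card ι :=
    natDegree_sum_le_of_forall_le _ _ fun j _ => (natDegree_C_mul_le _ _).trans
      (by rw [Lagrange.natDegree_nodal]; exact card_le_univ _)
  refine degree_lt_degree (hle.trans_lt ?_)
  rw [(monic_X_sub_C x).natDegree_mul Lagrange.nodal_monic, natDegree_X_sub_C,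
    Lagrange.natDegree_nodal, card_univ]
  omega

theorem monic_spectralPolynomial [DecidableEq ι] : (spectralPolynomial a ε x).Monic :=
  ((monic_X_sub_C x).mul Lagrange.nodal_monic).add_of_left
    (degree_sum_C_mul_nodal_erase_lt a ε x)

theorem natDegree_spectralPolynomial [DecidableEq ι] :
    (spectralPolynomial a ε x).natDegree = Fintype.card ι + 1 := by
  rw [spectralPolynomial, natDegree_add_eq_left_of_degree_lt
    (degree_sum_C_mul_nodal_erase_lt a ε x), (monic_X_sub_C x).natDegree_mul Lagrange.nodal_monic,
    natDegree_X_sub_C, Lagrange.natDegree_nodal, card_univ, add_comm]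

theorem eval_spectralPolynomial [DecidableEq ι] {z : 𝕜} (hz : ∀ j, z ≠ a j) :
    (spectralPolynomial a ε x).eval z = (∏ j, (z - a j)) * (spectralMap a ε z - x) := by
  have hterm : ∀ j, (∏ l, (z - a l)) * (ε j / (z - a j)) = ε j * ∏ l ∈ univ.erase j, (z - a l) := by
    intro j
    rw [← mul_prod_erase univ (fun l => z - a l) (mem_univ j)]
    field_simp [sub_ne_zero.2 (hz j)]
  simp only [spectralPolynomial, spectralMap, eval_add, eval_mul, eval_sub, eval_X, eval_C,
    eval_finsetSum, Lagrange.eval_nodal]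
  rw [mul_sub, mul_add, mul_sum]
  simp only [hterm]
  ring

theorem spectralFiber_subset_roots_toFinset [DecidableEq ι] [DecidableEq 𝕜] :
    spectralFiber a ε x ⊆ (spectralPolynomial a ε x).roots.toFinset := by
  rintro z ⟨hz, hFz⟩
  rw [mem_coe, Multiset.mem_toFinset, mem_roots (monic_spectralPolynomial a ε x).ne_zero, IsRoot,
    eval_spectralPolynomial a ε x hz, hFz, sub_self, mul_zero]

theorem spectralFiber_finite : (spectralFiber a ε x).Finite := by
  classical
  exact (finite_toSet _).subset (spectralFiber_subset_roots_toFinset a ε x)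

theorem ncard_spectralFiber_le : (spectralFiber a ε x).ncard ≤ Fintype.card ι + 1 := by
  classical
  calc (spectralFiber a ε x).ncard ≤ (spectralPolynomial a ε x).roots.toFinset.card := by
        rw [← Set.ncard_coe_finset]
        exact Set.ncard_le_ncard (spectralFiber_subset_roots_toFinset a ε x) (finite_toSet _)
    _ ≤ (spectralPolynomial a ε x).natDegree := (Multiset.toFinset_card_le _).trans (card_roots' _)
    _ = Fintype.card ι + 1 := natDegree_spectralPolynomial a ε x

end Algebra

section Analysis

variable {ι 𝕜 : Type*} [NormedField 𝕜] [CompleteSpace 𝕜]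

theorem exists_add_div_eq_of_le_norm {c e : 𝕜} {u : 𝕜 → 𝕜} {r D L : ℝ}
    (hD : 0 < D) (hr : ‖e‖ ≤ r * D) (hL : 2 * ‖e‖ * L ≤ D ^ 2)
    (hu : ∀ z ∈ closedBall c r, D ≤ ‖u z‖)
    (hlip : ∀ z ∈ closedBall c r, ∀ w ∈ closedBall c r, ‖u z - u w‖ ≤ L * ‖z - w‖) :
    ∃ z ∈ closedBall c r, c + e / u z = z := by
  have hr0 : 0 ≤ r := nonneg_of_mul_nonneg_left ((norm_nonneg e).trans hr) hD
  refine exists_fixedPoint_of_dist_le isClosed_closedBall.isComplete (nonempty_closedBall.2 hr0)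
    (fun z hz => ?_) (by norm_num : (1 / 2 : ℝ) < 1) fun z hz w hw => ?_
  · rw [mem_closedBall, dist_eq_norm, add_sub_cancel_left, norm_div,
      div_le_iff₀ (hD.trans_le (hu z hz))]
    exact hr.trans (by gcongr; exact hu z hz)
  · rw [dist_eq_norm, dist_eq_norm, add_sub_add_left_eq_sub]
    calc ‖e / u z - e / u w‖ ≤ ‖e‖ / D ^ 2 * ‖u z - u w‖ :=
          norm_div_sub_div_le hD (hu z hz) (hu w hw)
      _ ≤ ‖e‖ / D ^ 2 * (L * ‖z - w‖) := by gcongr; exact hlip z hz w hw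
      _ ≤ 1 / 2 * ‖z - w‖ := by
          rw [← mul_assoc]
          gcongr
          rw [div_mul_eq_mul_div, div_le_iff₀ (by positivity)]
          linarith

variable [Fintype ι]

theorem eventually_exists_mem_spectralFiber_near_self (a ε : ι → 𝕜) :
    ∀ᶠ x in cobounded 𝕜, ∃ z ∈ closedBall x (1 / 2), z ∈ spectralFiber a ε x := by
  set M := ∑ j, ‖ε j‖
  set c := 2 * M + 1
  have hc : 0 < c := by positivity
  filter_upwards [eventually_all.2 fun j =>
    (tendsto_dist_right_cobounded_atTop (a j)).eventually_ge_atTop (c + 1 / 2)] with x hx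
  have hfar : ∀ z ∈ closedBall x (1 / 2), ∀ j ∈ univ, c ≤ ‖z - a j‖ := by
    intro z hz j _
    rw [← dist_eq_norm]
    linarith [hx j, dist_triangle x z (a j), dist_comm x z, mem_closedBall.1 hz]
  have hmaps : Set.MapsTo (fun z => x - ∑ j, ε j / (z - a j)) (closedBall x (1 / 2))
      (closedBall x (1 / 2)) := by
    intro w hw
    rw [mem_closedBall, dist_eq_norm, sub_sub_cancel_left, norm_neg]
    calc ‖∑ j, ε j / (w - a j)‖ ≤ M / c := norm_sum_div_sub_le hc (hfar w hw)
      _ ≤ 1 / 2 := by rw [div_le_iff₀ hc]; linarith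
  have hcontr : ∀ z ∈ closedBall x (1 / 2), ∀ w ∈ closedBall x (1 / 2),
      dist (x - ∑ j, ε j / (z - a j)) (x - ∑ j, ε j / (w - a j)) ≤ 1 / 2 * dist z w := by
    intro z hz w hw
    rw [dist_eq_norm, dist_eq_norm, sub_sub_sub_cancel_left, norm_sub_rev]
    calc _ ≤ M / c ^ 2 * ‖z - w‖ := norm_sum_div_sub_sub_sum_div_sub_le hc (hfar z hz) (hfar w hw)
      _ ≤ 1 / 2 * ‖z - w‖ := by
          gcongr ?_ * _
          rw [div_le_iff₀ (by positivity)]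
          nlinarith
  obtain ⟨z, hz, hfix⟩ := exists_fixedPoint_of_dist_le isClosed_closedBall.isComplete
    (nonempty_closedBall.2 (by norm_num)) hmaps (by norm_num) hcontr
  refine ⟨z, hz, fun j hj => ?_, ?_⟩
  · have := hfar z hz j (mem_univ j)
    rw [hj, sub_self, norm_zero] at this
    linarith
  · simp only [spectralMap]
    linear_combination -hfix

theorem eventually_exists_mem_spectralFiber_near_pole [DecidableEq ι] {a ε : ι → 𝕜} {i : ι}
    {δ : ℝ} (hδ : 0 < δ) (hsep : ∀ j, j ≠ i → 2 * δ ≤ dist (a i) (a j)) (hε : ε i ≠ 0) :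
    ∀ᶠ x in cobounded 𝕜, ∃ z ∈ closedBall (a i) (δ / 2), z ∈ spectralFiber a ε x := by
  set s := univ.erase i
  set M := ∑ j ∈ s, ‖ε j‖
  set T : 𝕜 → 𝕜 := fun z => ∑ j ∈ s, ε j / (z - a j)
  set L := 1 + M / δ ^ 2
  obtain ⟨D, hD, hDr, hDL⟩ : ∃ D : ℝ, 0 < D ∧ ‖ε i‖ ≤ δ / 2 * D ∧ 2 * ‖ε i‖ * L ≤ D ^ 2 :=
    ((eventually_gt_atTop 0).and
      (((tendsto_id.const_mul_atTop (half_pos hδ)).eventually_ge_atTop _).and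
        ((tendsto_pow_atTop two_ne_zero).eventually_ge_atTop _))).exists
  have hfar : ∀ z ∈ closedBall (a i) (δ / 2), ∀ j ∈ s, δ ≤ ‖z - a j‖ := by
    intro z hz j hj
    rw [← dist_eq_norm]
    linarith [hsep j (ne_of_mem_erase hj), dist_triangle (a i) z (a j), dist_comm (a i) z,
      mem_closedBall.1 hz]
  filter_upwards [(tendsto_dist_right_cobounded_atTop (a i)).eventually_ge_atTop
    (D + δ / 2 + M / δ)] with x hx
  have hu : ∀ z ∈ closedBall (a i) (δ / 2), D ≤ ‖x - z - T z‖ := by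
    intro z hz
    have hT : ‖T z‖ ≤ M / δ := norm_sum_div_sub_le hδ (hfar z hz)
    have hsplit : x - z - T z = (x - a i) - ((z - a i) + T z) := by ring
    rw [hsplit]
    refine le_trans ?_ (norm_sub_norm_le _ _)
    linarith [norm_add_le (z - a i) (T z), mem_closedBall.1 hz, dist_eq_norm x (a i),
      dist_eq_norm z (a i)]
  have hlip : ∀ z ∈ closedBall (a i) (δ / 2), ∀ w ∈ closedBall (a i) (δ / 2),
      ‖(x - z - T z) - (x - w - T w)‖ ≤ L * ‖z - w‖ := by
    intro z hz w hw
    have hT : ‖T z - T w‖ ≤ M / δ ^ 2 * ‖z - w‖ :=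
      norm_sum_div_sub_sub_sum_div_sub_le hδ (hfar z hz) (hfar w hw)
    have hsplit : (x - z - T z) - (x - w - T w) = -((z - w) + (T z - T w)) := by ring
    rw [hsplit, norm_neg]
    linarith [norm_add_le (z - w) (T z - T w)]
  -- Near `a i`, `F z = x` reads `z = a i + ε i / (x - z - T z)`, a contraction for large `x`.
  obtain ⟨z, hz, hfix⟩ := exists_add_div_eq_of_le_norm (e := ε i) hD hDr hDL hu hlip
  have hu0 : x - z - T z ≠ 0 := norm_pos_iff.1 (hD.trans_le (hu z hz))
  have hzi : z - a i = ε i / (x - z - T z) := by linear_combination -hfix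
  have hzi0 : z - a i ≠ 0 := hzi ▸ div_ne_zero hε hu0
  refine ⟨z, hz, fun j hj => ?_, ?_⟩
  · by_cases hji : j = i
    · exact hzi0 (hji ▸ sub_eq_zero.2 hj)
    · have := hfar z hz j (mem_erase.2 ⟨hji, mem_univ j⟩)
      rw [hj, sub_self, norm_zero] at this
      linarith
  · have hterm : ε i / (z - a i) = x - z - T z := by rw [hzi]; field_simp
    rw [spectralMap, ← add_sum_erase _ _ (mem_univ i), hterm]
    ring

end Analysis

theorem exists_pos_eventually_spectralFiber {ι 𝕜 : Type*} [Fintype ι] [NormedField 𝕜]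
    [CompleteSpace 𝕜] {a ε : ι → 𝕜} (ha : Injective a) (hε : ∀ i, ε i ≠ 0) :
    ∃ δ > 0, Pairwise (Disjoint on fun i => ball (a i) δ) ∧ ∀ᶠ x in cobounded 𝕜,
      (∀ i, ∃! z, z ∈ ball (a i) δ ∧ z ∈ spectralFiber a ε x) ∧
      (∃! z, z ∈ ball x 1 ∧ z ∈ spectralFiber a ε x) ∧
      (∀ i, Disjoint (ball x 1) (ball (a i) δ)) ∧
      spectralFiber a ε x ⊆ ball x 1 ∪ ⋃ i, ball (a i) δ ∧
      (spectralFiber a ε x).ncard = Fintype.card ι + 1 := by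
  classical
  obtain ⟨d, hd, hsep⟩ := exists_pos_forall_le_dist ha
  have hpoles : Pairwise (Disjoint on fun i => ball (a i) (d / 2)) := fun i j hij =>
    ball_disjoint_ball (by linarith [hsep i j hij])
  refine ⟨d / 2, half_pos hd, hpoles, ?_⟩
  filter_upwards [eventually_exists_mem_spectralFiber_near_self a ε,
    eventually_all.2 fun i => eventually_exists_mem_spectralFiber_near_pole (a := a) (half_pos hd)
      (fun j hj => by linarith [hsep i j hj.symm]) (hε i),
    eventually_all.2 fun i =>
      (tendsto_dist_right_cobounded_atTop (a i)).eventually_ge_atTop (1 + d / 2)]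
    with x hself hpole hfar
  have hdisj : ∀ i, Disjoint (ball x 1) (ball (a i) (d / 2)) := fun i => ball_disjoint_ball (hfar i)
  let U : Option ι → Set 𝕜 := fun o => o.elim (ball x 1) fun i => ball (a i) (d / 2)
  have hU : Pairwise (Disjoint on U) := by
    rintro (_ | i) (_ | j) hij
    · exact absurd rfl hij
    · exact hdisj j
    · exact (hdisj i).symm
    · exact hpoles fun h => hij (congrArg some h)
  have hmeet : ∀ o, (spectralFiber a ε x ∩ U o).Nonempty := by
    rintro (_ | i)
    · obtain ⟨z, hz, hsol⟩ := hself
      exact ⟨z, hsol, closedBall_subset_ball (by norm_num) hz⟩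
    · obtain ⟨z, hz, hsol⟩ := hpole i
      exact ⟨z, hsol, closedBall_subset_ball (by linarith) hz⟩
  obtain ⟨huniq, hcover, hcard⟩ := exists_unique_mem_of_ncard_le (spectralFiber_finite a ε x)
    (by simpa using ncard_spectralFiber_le a ε x) hU hmeet
  refine ⟨fun i => huniq (some i), huniq none, hdisj, ?_, by simpa using hcard⟩
  simpa [Set.iUnion_option, U] using hcover

theorem stmt_3_general (k : ℕ) (a ε : Fin k → ℝ)
    (ha : StrictMono a) (hε : ∀ i, 0 < ε i)
    (F : ℂ → ℂ)
    (hF : ∀ z : ℂ, F z = z + ∑ j, (ε j : ℂ) / (z - (a j : ℂ))) :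
    ∃ R > (0 : ℝ), ∃ δ > (0 : ℝ),
      (∀ i j : Fin k, i ≠ j →
        Disjoint (Metric.ball ((a i : ℂ)) δ) (Metric.ball ((a j : ℂ)) δ)) ∧
      ∀ x : ℂ, R < ‖x‖ →
        (∀ i : Fin k, ∃! z : ℂ,
          z ∈ Metric.ball ((a i : ℂ)) δ ∧ (∀ j, z ≠ (a j : ℂ)) ∧ F z = x) ∧
        (∃! z : ℂ, z ∈ Metric.ball x 1 ∧ (∀ j, z ≠ (a j : ℂ)) ∧ F z = x) ∧
        (∀ i : Fin k, Disjoint (Metric.ball x 1) (Metric.ball ((a i : ℂ)) δ)) ∧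
        ({z : ℂ | (∀ j, z ≠ (a j : ℂ)) ∧ F z = x} ⊆
          Metric.ball x 1 ∪ ⋃ i : Fin k, Metric.ball ((a i : ℂ)) δ) ∧
        Set.ncard {z : ℂ | (∀ j, z ≠ (a j : ℂ)) ∧ F z = x} = k + 1 := by
  obtain rfl : F = spectralMap (fun j => (a j : ℂ)) (fun j => (ε j : ℂ)) := funext hF
  obtain ⟨δ, hδ, hpoles, hsol⟩ := exists_pos_eventually_spectralFiber
    (Complex.ofReal_injective.comp ha.injective) fun i => Complex.ofReal_ne_zero.2 (hε i).ne'
  obtain ⟨R, -, hR⟩ := hasBasis_cobounded_norm.eventually_iff.1 hsol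
  refine ⟨max R 1, by positivity, δ, hδ, fun i j hij => hpoles hij, fun x hx => ?_⟩
  obtain ⟨hnear_poles, hnear_self, hdisj, hcover, hcard⟩ := hR (le_of_max_le_left hx.le)
  exact ⟨hnear_poles, hnear_self, hdisj, hcover, by rwa [Fintype.card_fin] at hcard⟩

/-- for `|x|` large, the equation `F(z) = x` has exactly `k+1` solutions:
one near each pole `a_i` and one near `x` itself. -/
theorem stmt_3 (k : ℕ) (hk : 1 ≤ k) (a ε : Fin k → ℝ)
    (ha : StrictMono a) (hε : ∀ i, 0 < ε i) (hsum : ∑ i, ε i = 1)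
    (F : ℂ → ℂ)
    (hF : ∀ z : ℂ, F z = z + ∑ j, (ε j : ℂ) / (z - (a j : ℂ))) :
    ∃ R > (0 : ℝ), ∃ δ > (0 : ℝ),
      (∀ i j : Fin k, i ≠ j →
        Disjoint (Metric.ball ((a i : ℂ)) δ) (Metric.ball ((a j : ℂ)) δ)) ∧
      ∀ x : ℂ, R < ‖x‖ →
        (∀ i : Fin k, ∃! z : ℂ,
          z ∈ Metric.ball ((a i : ℂ)) δ ∧ (∀ j, z ≠ (a j : ℂ)) ∧ F z = x) ∧
        (∃! z : ℂ, z ∈ Metric.ball x 1 ∧ (∀ j, z ≠ (a j : ℂ)) ∧ F z = x) ∧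
        (∀ i : Fin k, Disjoint (Metric.ball x 1) (Metric.ball ((a i : ℂ)) δ)) ∧
        ({z : ℂ | (∀ j, z ≠ (a j : ℂ)) ∧ F z = x} ⊆
          Metric.ball x 1 ∪ ⋃ i : Fin k, Metric.ball ((a i : ℂ)) δ) ∧
        Set.ncard {z : ℂ | (∀ j, z ≠ (a j : ℂ)) ∧ F z = x} = k + 1 :=
  stmt_3_general k a ε ha hε F hF
end

section
/- Let k ≥ 1 be an integer, a_1 < … < a_k distinct real numbers, and ε_1, …, ε_k positive reals with ε_1 + … + ε_k = 1. For s > 0 consider the scaled external eigenvalues s·a_1, …, s·a_k and the branch-point equation ∑_{j=1}^k ε_j/(z − s·a_j)² = 1. Then there exists s_0 > 0 such that for every s > s_0 this equation has exactly 2k solutions in ℂ, all of them real and distinct, say z_1(s) < z_2(s) < … < z_{2k}(s), and they interlace the scaled eigenvalues: z_{2i−1}(s) < s·a_i < z_{2i}(s) for each i = 1, …, k. Moreover, as s → ∞, z_{2i−1}(s) − s·a_i → −√ε_i and z_{2i}(s) − s·a_i → √ε_i. -/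
/-!
Clearing denominators turns `∑ j, ε j / (w - b j) ^ 2 = 1` into a polynomial equation of degree
`2k`, so it has at most `2k` complex solutions. Once the poles `b j = s * a j` are more than `4`
apart, the term `ε i / (x - b i) ^ 2` exceeds `1` at distance `√(ε i) / 2` from `b i`, while the
whole sum is below `1` at distance `2`; the intermediate value theorem then gives a real solution
on each side of each pole, `2k` in all, hence every solution. At such a solution the far poles
contribute `O(1 / s²)`, so `(x - b i) ^ 2 = ε i (1 + O(1 / s²))`.
-/

open Filter Finset Topology

section Interlace

variable {α : Type*} {k : ℕ} (L R : Fin k → α)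

def interlace (m : Fin (2 * k)) : α :=
  if m.val % 2 = 0 then L ⟨m / 2, by omega⟩ else R ⟨m / 2, by omega⟩

@[simp]
lemma interlace_two_mul (i : Fin k) (h : 2 * i.val < 2 * k) :
    interlace L R ⟨2 * i, h⟩ = L i := by
  simp [interlace]

@[simp]
lemma interlace_two_mul_add_one (i : Fin k) (h : 2 * i.val + 1 < 2 * k) :
    interlace L R ⟨2 * i + 1, h⟩ = R i := by
  simp [interlace, Nat.add_mod, Nat.add_div]

lemma interlace_mem {S : Set α} (hL : ∀ i, L i ∈ S) (hR : ∀ i, R i ∈ S) (m : Fin (2 * k)) :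
    interlace L R m ∈ S := by
  unfold interlace
  split_ifs
  exacts [hL _, hR _]

lemma strictMono_interlace [Preorder α] (hLR : ∀ i, L i < R i)
    (hRL : ∀ i j, i < j → R i < L j) : StrictMono (interlace L R) := by
  have hle : ∀ m : Fin (2 * k), interlace L R m ≤ R ⟨m / 2, by omega⟩ := fun m => by
    unfold interlace; split_ifs
    exacts [(hLR _).le, le_rfl]
  have hge : ∀ m : Fin (2 * k), L ⟨m / 2, by omega⟩ ≤ interlace L R m := fun m => by
    unfold interlace; split_ifs
    exacts [le_rfl, (hLR _).le]
  intro m n hmn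
  rcases Nat.lt_or_ge (m / 2) (n / 2) with h | h
  · exact (hle m).trans_lt ((hRL _ _ (Fin.mk_lt_mk.2 h)).trans_le (hge n))
  · have hm : m.val % 2 = 0 := by omega
    have hn : ¬ n.val % 2 = 0 := by omega
    have hmn' : (⟨m / 2, by omega⟩ : Fin k) = ⟨n / 2, by omega⟩ := Fin.ext (by simp; omega)
    simpa [interlace, hm, hn, hmn'] using hLR _

end Interlace

section BranchPoints

open Polynomial

lemma natDegree_prod_X_sub_C_sq {ι : Type*} (b : ι → ℂ) (s : Finset ι) :
    (∏ l ∈ s, (X - C (b l)) ^ 2).natDegree = 2 * s.card := by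
  rw [natDegree_prod_of_monic _ _ fun l _ => (monic_X_sub_C _).pow 2]
  simp [(monic_X_sub_C _).natDegree_pow, mul_comm]

variable {ι : Type*} [Fintype ι] [DecidableEq ι]

def branchPoints (e b : ι → ℂ) : Set ℂ :=
  {w | (∀ j, w ≠ b j) ∧ ∑ j, e j / (w - b j) ^ 2 = 1}

/-- Clearing denominators in `∑ j, e j / (X - b j) ^ 2 = 1`. -/
noncomputable def branchPoly (e b : ι → ℂ) : ℂ[X] :=
  ∏ j, (X - C (b j)) ^ 2 - ∑ j, C (e j) * ∏ l ∈ univ.erase j, (X - C (b l)) ^ 2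

lemma degree_sum_lt_degree_prod (e b : ι → ℂ) :
    (∑ j, C (e j) * ∏ l ∈ univ.erase j, (X - C (b l)) ^ 2).degree
      < (∏ j, (X - C (b j)) ^ 2).degree := by
  rw [degree_eq_natDegree
    (monic_prod_of_monic _ _ fun j _ => (monic_X_sub_C (b j)).pow 2).ne_zero,
    natDegree_prod_X_sub_C_sq, card_univ]
  refine (degree_sum_le _ _).trans_lt
    ((Finset.sup_lt_iff (WithBot.bot_lt_coe _)).2 fun j _ => ?_)
  refine degree_le_natDegree.trans_lt (WithBot.coe_lt_coe.2 ?_)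
  refine natDegree_C_mul_le _ _ |>.trans_lt ?_
  rw [natDegree_prod_X_sub_C_sq, card_erase_of_mem (mem_univ j), card_univ]
  have := Fintype.card_pos_iff.2 ⟨j⟩
  push_cast
  omega

lemma branchPoly_monic (e b : ι → ℂ) : (branchPoly e b).Monic :=
  (monic_prod_of_monic _ _ fun j _ => (monic_X_sub_C (b j)).pow 2).sub_of_left
    (degree_sum_lt_degree_prod e b)

lemma natDegree_branchPoly (e b : ι → ℂ) :
    (branchPoly e b).natDegree = 2 * Fintype.card ι := by
  rw [branchPoly, natDegree_eq_of_degree_eq (degree_sub_eq_left_of_degree_lt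
    (degree_sum_lt_degree_prod e b)), natDegree_prod_X_sub_C_sq, card_univ]

lemma branchPoly_eval_eq_zero {e b : ι → ℂ} {w : ℂ} (hw : w ∈ branchPoints e b) :
    (branchPoly e b).eval w = 0 := by
  obtain ⟨hpole, hsum⟩ := hw
  have hd : ∀ j, (w - b j) ^ 2 ≠ 0 := fun j => pow_ne_zero _ (sub_ne_zero.2 (hpole j))
  have hterm : ∀ j, e j * ∏ l ∈ univ.erase j, (w - b l) ^ 2
      = e j / (w - b j) ^ 2 * ∏ l, (w - b l) ^ 2 := fun j => by
    rw [← mul_prod_erase _ _ (mem_univ j), ← mul_assoc, div_mul_cancel₀ _ (hd j)]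
  simp only [branchPoly, eval_sub, eval_prod, eval_finsetSum, eval_mul, eval_C, eval_pow,
    eval_X, hterm, ← sum_mul, hsum, one_mul, sub_self]

lemma branchPoints_eq_range {κ : Type*} [Finite κ] {e b : ι → ℂ} {g : κ → ℂ}
    (hcard : 2 * Fintype.card ι ≤ Nat.card κ) (hg : Function.Injective g)
    (hmem : ∀ m, g m ∈ branchPoints e b) :
    branchPoints e b = Set.range g := by
  have hsub : branchPoints e b ⊆ ((branchPoly e b).roots.toFinset : Set ℂ) := fun w hw => by
    simpa [(branchPoly_monic e b).ne_zero] using branchPoly_eval_eq_zero hw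
  refine (Set.eq_of_subset_of_ncard_le (Set.range_subset_iff.2 hmem) ?_
    ((finite_toSet _).subset hsub)).symm
  calc (branchPoints e b).ncard ≤ (branchPoly e b).roots.toFinset.card :=
        (Set.ncard_le_ncard hsub (finite_toSet _)).trans_eq (Set.ncard_coe_finset _)
    _ ≤ (branchPoly e b).natDegree := (Multiset.toFinset_card_le _).trans (card_roots' _)
    _ ≤ (Set.range g).ncard := by rwa [natDegree_branchPoly, Set.ncard_range_of_injective hg]

end BranchPoints

section BranchSum

variable {ι : Type*}

lemma ne_of_abs_sub_le {b : ι → ℝ} {D : ℝ} (hD : 2 < D) (hb : ∀ i j, i ≠ j → D ≤ |b i - b j|)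
    {i : ι} {x : ℝ} (hx : |x - b i| ≤ 2) (hxi : x ≠ b i) (j : ι) : x ≠ b j := by
  rintro rfl
  have := hb i j (fun h => hxi (h ▸ rfl))
  rw [abs_sub_comm] at hx
  linarith

variable [Fintype ι]

noncomputable def branchSum (ε b : ι → ℝ) (x : ℝ) : ℝ := ∑ j, ε j / (x - b j) ^ 2

lemma branchSum_neg (ε b : ι → ℝ) (x : ℝ) : branchSum ε (-b) (-x) = branchSum ε b x := by
  simp only [branchSum, Pi.neg_apply, neg_sub_neg, ← neg_sub (b _) x, neg_sq]

lemma continuousOn_branchSum (ε b : ι → ℝ) {s : Set ℝ} (hs : ∀ x ∈ s, ∀ j, x ≠ b j) :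
    ContinuousOn (branchSum ε b) s :=
  continuousOn_finsetSum _ fun j _ => continuousOn_const.div (by fun_prop)
    fun x hx => pow_ne_zero _ (sub_ne_zero.2 (hs x hx j))

lemma div_sq_le_branchSum {ε : ι → ℝ} (hε : ∀ i, 0 ≤ ε i) (b : ι → ℝ) (x : ℝ) (i : ι) :
    ε i / (x - b i) ^ 2 ≤ branchSum ε b x :=
  single_le_sum (f := fun j => ε j / (x - b j) ^ 2) (fun j _ => div_nonneg (hε j) (sq_nonneg _))
    (mem_univ i)

lemma ofReal_mem_branchPoints {ε b : ι → ℝ} {x : ℝ} (hx : ∀ j, x ≠ b j)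
    (hfx : branchSum ε b x = 1) :
    (x : ℂ) ∈ branchPoints (fun j => (ε j : ℂ)) (fun j => (b j : ℂ)) :=
  ⟨fun j h => hx j (Complex.ofReal_injective h), by
    show ∑ j, (ε j : ℂ) / ((x : ℂ) - (b j : ℂ)) ^ 2 = 1
    exact_mod_cast hfx⟩

variable [DecidableEq ι]

lemma sum_erase_div_sq_le {ε b : ι → ℝ} {D : ℝ} (hε : ∀ i, 0 ≤ ε i) (hsum : ∑ i, ε i = 1)
    (hD : 2 < D) (hb : ∀ i j, i ≠ j → D ≤ |b i - b j|) {i : ι} {x : ℝ} (hx : |x - b i| ≤ 2) :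
    ∑ j ∈ univ.erase i, ε j / (x - b j) ^ 2 ≤ 1 / (D - 2) ^ 2 := by
  have hfar : ∀ j ∈ univ.erase i, (D - 2) ^ 2 ≤ (x - b j) ^ 2 := fun j hj => by
    have := hb i j (ne_of_mem_erase hj).symm
    have := abs_sub_abs_le_abs_sub (b i - b j) (b i - x)
    rw [abs_sub_comm (b i) x, sub_sub_sub_cancel_left] at this
    rw [← sq_abs (x - b j)]
    exact pow_le_pow_left₀ (by linarith) (by linarith) 2
  calc ∑ j ∈ univ.erase i, ε j / (x - b j) ^ 2 ≤ ∑ j ∈ univ.erase i, ε j / (D - 2) ^ 2 :=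
        sum_le_sum fun j hj => div_le_div_of_nonneg_left (hε j) (by positivity) (hfar j hj)
    _ ≤ ∑ j, ε j / (D - 2) ^ 2 :=
        sum_le_sum_of_subset_of_nonneg (erase_subset _ _) fun j _ _ =>
          div_nonneg (hε j) (sq_nonneg _)
    _ = 1 / (D - 2) ^ 2 := by rw [← sum_div, hsum]

lemma exists_branchSum_eq_one_mem_Ioo_right {ε b : ι → ℝ} {D : ℝ} (hε : ∀ i, 0 < ε i)
    (hsum : ∑ i, ε i = 1) (hD : 4 < D) (hb : ∀ i j, i ≠ j → D ≤ |b i - b j|) (i : ι) :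
    ∃ x ∈ Set.Ioo (b i) (b i + 2), branchSum ε b x = 1 := by
  have hε0 : ∀ j, 0 ≤ ε j := fun j => (hε j).le
  have hεi : ε i ≤ 1 := hsum ▸ single_le_sum (fun j _ => hε0 j) (mem_univ i)
  set t := √(ε i) / 2 with ht_def
  have ht : 0 < t := div_pos (Real.sqrt_pos.2 (hε i)) two_pos
  have ht2 : t < 2 := by linarith [Real.sqrt_le_one.2 hεi]
  have hcont : ContinuousOn (branchSum ε b) (Set.Icc (b i + t) (b i + 2)) :=
    continuousOn_branchSum ε b fun x hx => ne_of_abs_sub_le (by linarith) hb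
      (abs_le.2 ⟨by linarith [hx.1], by linarith [hx.2]⟩) (by linarith [hx.1])
  have hfar : branchSum ε b (b i + 2) < 1 := by
    have hoff := sum_erase_div_sq_le hε0 hsum (by linarith) hb (i := i) (x := b i + 2) (by norm_num)
    have hD4 : 1 / (D - 2) ^ 2 < 1 / 4 := by
      rw [one_div_lt_one_div (by nlinarith) (by norm_num)]; nlinarith
    rw [branchSum, ← add_sum_erase _ _ (mem_univ i), add_sub_cancel_left]
    linarith
  have hnear : 1 < branchSum ε b (b i + t) := calc
    1 < ε i / (b i + t - b i) ^ 2 := by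
      rw [add_sub_cancel_left, div_pow, Real.sq_sqrt (hε0 i), div_div_eq_mul_div,
        lt_div_iff₀ (hε i)]
      linarith [hε i]
    _ ≤ branchSum ε b (b i + t) := div_sq_le_branchSum hε0 b _ i
  obtain ⟨x, hx, hfx⟩ := intermediate_value_Ioo' (by linarith) hcont ⟨hfar, hnear⟩
  exact ⟨x, ⟨by linarith [hx.1], hx.2⟩, hfx⟩

lemma exists_branchSum_eq_one_mem_Ioo_left {ε b : ι → ℝ} {D : ℝ} (hε : ∀ i, 0 < ε i)
    (hsum : ∑ i, ε i = 1) (hD : 4 < D) (hb : ∀ i j, i ≠ j → D ≤ |b i - b j|) (i : ι) :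
    ∃ x ∈ Set.Ioo (b i - 2) (b i), branchSum ε b x = 1 := by
  obtain ⟨y, hy, hfy⟩ := exists_branchSum_eq_one_mem_Ioo_right hε hsum hD
    (b := -b) (fun i j hij => by
      rw [Pi.neg_apply, Pi.neg_apply, neg_sub_neg, abs_sub_comm]; exact hb i j hij) i
  simp only [Pi.neg_apply, Set.mem_Ioo] at hy
  exact ⟨-y, ⟨by linarith, by linarith⟩, by rwa [← branchSum_neg, neg_neg]⟩

lemma abs_sq_sub_le_of_branchSum_eq_one {ε b : ι → ℝ} {D : ℝ} (hε : ∀ i, 0 ≤ ε i)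
    (hsum : ∑ i, ε i = 1) (hD : 2 < D) (hb : ∀ i j, i ≠ j → D ≤ |b i - b j|) {i : ι} {x : ℝ}
    (hx : |x - b i| ≤ 2) (hxi : x ≠ b i) (hfx : branchSum ε b x = 1) :
    |(x - b i) ^ 2 - ε i| ≤ 4 / (D - 2) ^ 2 := by
  rw [branchSum, ← add_sum_erase _ _ (mem_univ i)] at hfx
  set r := ∑ j ∈ univ.erase i, ε j / (x - b j) ^ 2
  have hr0 : 0 ≤ r := sum_nonneg fun j _ => div_nonneg (hε j) (sq_nonneg _)
  have hr : r ≤ 1 / (D - 2) ^ 2 := sum_erase_div_sq_le hε hsum hD hb hx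
  have hq : (x - b i) ^ 2 ≠ 0 := pow_ne_zero 2 (sub_ne_zero.2 hxi)
  have hq4 : (x - b i) ^ 2 ≤ 4 := by
    rw [← sq_abs]; nlinarith [abs_nonneg (x - b i)]
  have hεi : ε i = (1 - r) * (x - b i) ^ 2 := (div_eq_iff hq).1 (by linarith)
  rw [hεi, show (x - b i) ^ 2 - (1 - r) * (x - b i) ^ 2 = (x - b i) ^ 2 * r by ring,
    abs_of_nonneg (by positivity)]
  calc (x - b i) ^ 2 * r ≤ 4 * (1 / (D - 2) ^ 2) := mul_le_mul hq4 hr hr0 (by norm_num)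
    _ = 4 / (D - 2) ^ 2 := by ring

end BranchSum

lemma exists_pos_add_le_of_strictMono {ι : Type*} [Finite ι] [Preorder ι] {a : ι → ℝ}
    (ha : StrictMono a) : ∃ δ > 0, ∀ i j, i < j → a i + δ ≤ a j := by
  have hev : ∀ᶠ δ in 𝓝[>] (0 : ℝ), ∀ p : ι × ι, p.1 < p.2 → a p.1 + δ ≤ a p.2 := by
    refine eventually_all.2 fun p => ?_
    by_cases hp : p.1 < p.2
    · filter_upwards [nhdsWithin_le_nhds (eventually_le_nhds (sub_pos.2 (ha hp)))] with δ hδ _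
      linarith
    · exact Eventually.of_forall fun _ h => absurd h hp
  obtain ⟨δ, hδ, hδ0⟩ := (hev.and self_mem_nhdsWithin).exists
  exact ⟨δ, hδ0, fun i j hij => hδ (i, j) hij⟩

lemma le_abs_sub_of_add_le {ι : Type*} [LinearOrder ι] {b : ι → ℝ} {D : ℝ}
    (hb : ∀ i j, i < j → b i + D ≤ b j) (i j : ι) (hij : i ≠ j) : D ≤ |b i - b j| := by
  rcases hij.lt_or_gt with h | h
  · rw [abs_sub_comm]; exact le_abs.2 (Or.inl (by linarith [hb i j h]))
  · exact le_abs.2 (Or.inl (by linarith [hb j i h]))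

lemma tendsto_sqrt_of_abs_sq_sub_le {α : Type*} {l : Filter α} {y g : α → ℝ} {c : ℝ}
    (hg : Tendsto g l (𝓝 0)) (hy : ∀ᶠ t in l, 0 ≤ y t ∧ |y t ^ 2 - c| ≤ g t) :
    Tendsto y l (𝓝 √c) := by
  have hsq : Tendsto (fun t => y t ^ 2) l (𝓝 c) :=
    tendsto_iff_norm_sub_tendsto_zero.2 <|
      squeeze_zero' (Eventually.of_forall fun _ => norm_nonneg _)
        (hy.mono fun _ ht => (Real.norm_eq_abs _).trans_le ht.2) hg
  exact hsq.sqrt.congr' (hy.mono fun _ ht => Real.sqrt_sq ht.1)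

lemma exists_interlacing_branchPoints {k : ℕ} {ε b : Fin k → ℝ} {D : ℝ} (hε : ∀ i, 0 < ε i)
    (hsum : ∑ i, ε i = 1) (hD : 4 < D) (hb : ∀ i j, i < j → b i + D ≤ b j) :
    ∃ L R : Fin k → ℝ,
      (∀ i, L i ∈ Set.Ioo (b i - 2) (b i) ∧ |(L i - b i) ^ 2 - ε i| ≤ 4 / (D - 2) ^ 2) ∧
      (∀ i, R i ∈ Set.Ioo (b i) (b i + 2) ∧ |(R i - b i) ^ 2 - ε i| ≤ 4 / (D - 2) ^ 2) ∧
      StrictMono (interlace L R) ∧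
      branchPoints (fun j => (ε j : ℂ)) (fun j => (b j : ℂ))
        = Set.range fun m => ((interlace L R m : ℝ) : ℂ) := by
  have hb' := le_abs_sub_of_add_le hb
  have hroot : ∀ i x, |x - b i| ≤ 2 → x ≠ b i → branchSum ε b x = 1 →
      (x : ℂ) ∈ branchPoints (fun j => (ε j : ℂ)) (fun j => (b j : ℂ)) ∧
        |(x - b i) ^ 2 - ε i| ≤ 4 / (D - 2) ^ 2 := fun i x hx hxi hfx =>
    ⟨ofReal_mem_branchPoints (ne_of_abs_sub_le (by linarith) hb' hx hxi) hfx,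
      abs_sq_sub_le_of_branchSum_eq_one (fun j => (hε j).le) hsum (by linarith) hb' hx hxi hfx⟩
  choose L hL hLs using exists_branchSum_eq_one_mem_Ioo_left hε hsum hD hb'
  choose R hR hRs using exists_branchSum_eq_one_mem_Ioo_right hε hsum hD hb'
  have hL' := fun i => hroot i (L i) (abs_le.2 ⟨by linarith [(hL i).1], by linarith [(hL i).2]⟩)
    (hL i).2.ne (hLs i)
  have hR' := fun i => hroot i (R i) (abs_le.2 ⟨by linarith [(hR i).1], by linarith [(hR i).2]⟩)
    (hR i).1.ne' (hRs i)
  have hmono : StrictMono (interlace L R) := strictMono_interlace L R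
    (fun i => (hL i).2.trans (hR i).1) fun i j hij => by linarith [(hR i).2, (hL j).1, hb i j hij]
  refine ⟨L, R, fun i => ⟨hL i, (hL' i).2⟩, fun i => ⟨hR i, (hR' i).2⟩, hmono,
    branchPoints_eq_range (by simp) (Complex.ofReal_injective.comp hmono.injective) ?_⟩
  exact interlace_mem L R
    (S := {x : ℝ | (x : ℂ) ∈ branchPoints (fun j => (ε j : ℂ)) (fun j => (b j : ℂ))})
    (fun i => (hL' i).1) (fun i => (hR' i).1)

/-- large-time configuration. For `s` large, the branch-point equation
`∑_j ε_j/(z - s·a_j)² = 1` has exactly `2k` solutions, all real and distinct,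
interlacing the scaled eigenvalues `s·a_i`, and `z_{2i∓1}(s) - s·a_i → ∓√ε_i` as `s → ∞`. -/
theorem stmt_7 (k : ℕ) (a ε : Fin k → ℝ)
    (ha : StrictMono a) (hε : ∀ i, 0 < ε i) (hsum : ∑ i, ε i = 1) :
    ∃ s₀ > (0 : ℝ), ∃ z : ℝ → Fin (2 * k) → ℝ,
      (∀ s : ℝ, s₀ < s →
        StrictMono (z s) ∧
        ({w : ℂ | (∀ j, w ≠ (s : ℂ) * (a j : ℂ)) ∧
            ∑ j, (ε j : ℂ) / (w - (s : ℂ) * (a j : ℂ)) ^ 2 = 1}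
          = Set.range fun m : Fin (2 * k) => ((z s m : ℝ) : ℂ)) ∧
        (∀ i : Fin k,
          z s ⟨2 * i.val, by have := i.isLt; omega⟩ < s * a i ∧
          s * a i < z s ⟨2 * i.val + 1, by have := i.isLt; omega⟩)) ∧
      (∀ i : Fin k,
        Tendsto (fun s : ℝ => z s ⟨2 * i.val, by have := i.isLt; omega⟩ - s * a i)
          atTop (nhds (-Real.sqrt (ε i))) ∧
        Tendsto (fun s : ℝ => z s ⟨2 * i.val + 1, by have := i.isLt; omega⟩ - s * a i)
          atTop (nhds (Real.sqrt (ε i)))) := by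
  obtain ⟨δ, hδ, hgap⟩ := exists_pos_add_le_of_strictMono ha
  have hconf : ∀ s, 4 / δ < s → 4 < s * δ ∧ ∀ i j, i < j → s * a i + s * δ ≤ s * a j := by
    intro s hs
    have hs0 : 0 < s := (div_pos four_pos hδ).trans hs
    exact ⟨(div_lt_iff₀ hδ).1 hs, fun i j hij => by nlinarith [hgap i j hij]⟩
  choose! L R hL hR hmono hset using fun s hs =>
    exists_interlacing_branchPoints (b := fun j => s * a j) hε hsum (hconf s hs).1 (hconf s hs).2
  have hg : Tendsto (fun s => 4 / (s * δ - 2) ^ 2) atTop (𝓝 0) :=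
    tendsto_const_nhds.div_atTop <| (tendsto_pow_atTop two_ne_zero).comp <|
      tendsto_atTop_add_const_right _ (-2) (tendsto_id.atTop_mul_const hδ)
  refine ⟨4 / δ, by positivity, fun s => interlace (L s) (R s),
    fun s hs => ⟨hmono s hs, ?_, fun i => ?_⟩, fun i => ⟨?_, ?_⟩⟩
  · simpa only [branchPoints, Complex.ofReal_mul] using hset s hs
  · simpa using ⟨(hL s hs i).1.2, (hR s hs i).1.1⟩
  · have := (tendsto_sqrt_of_abs_sq_sub_le hg (y := fun s => s * a i - L s i) (c := ε i) ?_).neg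
    · simpa using this
    filter_upwards [eventually_gt_atTop (4 / δ)] with s hs
    obtain ⟨hmem, hbound⟩ := hL s hs i
    exact ⟨by linarith [hmem.2], by rwa [← neg_sub (L s i), neg_sq]⟩
  · simp only [interlace_two_mul_add_one]
    refine tendsto_sqrt_of_abs_sq_sub_le hg ?_
    filter_upwards [eventually_gt_atTop (4 / δ)] with s hs
    obtain ⟨hmem, hbound⟩ := hR s hs i
    exact ⟨by linarith [hmem.1], hbound⟩
end
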